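/- arXiv:1310.6607 — 2 statements merged into one kernel-verified Lean document; each statement's English description precedes it below -/
import Mathlib

section
/- Let t = 6 and let V = F_2^6 / X where X = {0, (1,1,1,1,1,1)}. Define S: V → ℕ by sending the class of (e_1,...,e_6) to min(Σe_j, 6 − Σe_j) (sum taken in ℕ, choosing any representative). If U ⊆ V is a 4-dimensional subspace such that no element u of U has S(u) = 1, then there exist elements a, b, c of U with a + b + c = 0 and S(a) = S(b) = S(c) = 2. -/
/-- The `t`-dimensional vector space over `𝔽₂`. -/
abbrev F2 (t : ℕ) := Fin t → ZMod 2

/-- Hamming weight: the number of nonzero coordinates. -/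
def wt {t : ℕ} (e : F2 t) : ℕ := (Finset.univ.filter fun i => e i = 1).card

/-- The subspace `X = {0, (1,…,1)}` spanned by the all-ones vector. -/
def allOnes (t : ℕ) : Submodule (ZMod 2) (F2 t) :=
  Submodule.span (ZMod 2) {(fun _ => 1 : F2 t)}

/-- The quotient space `V = 𝔽₂^t / X`. -/
abbrev V (t : ℕ) := F2 t ⧸ allOnes t

lemma finrank_V6 : Module.finrank (ZMod 2) (V 6) = 5 := by
  have h := Submodule.finrank_quotient_add_finrank (allOnes 6)
  have h1 : Module.finrank (ZMod 2) (allOnes 6) = 1 := by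
    apply finrank_span_singleton
    intro hzero
    have := congrFun hzero 0
    simp at this
  have h2 : Module.finrank (ZMod 2) (F2 6) = 6 := by
    simp [Module.finrank_pi]
  rw [h1, h2] at h
  have h' : Module.finrank (ZMod 2) (V 6) + 1 = 6 := h
  omega

lemma sum_mem_of_not_mem (U : Submodule (ZMod 2) (V 6))
    (hU : Module.finrank (ZMod 2) U = 4)
    {x y : V 6} (hx : x ∉ U) (hy : y ∉ U) : x + y ∈ U := by
  have htop : U ⊔ Submodule.span (ZMod 2) {x} = ⊤ := by
    apply Submodule.eq_top_of_finrank_eq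
    rw [finrank_V6]
    have hlt : U < U ⊔ Submodule.span (ZMod 2) {x} := by
      refine lt_of_le_of_ne le_sup_left ?_
      intro h
      exact hx (h ▸ Submodule.mem_sup_right (Submodule.mem_span_singleton_self x))
    have := Submodule.finrank_lt_finrank_of_lt hlt
    have hle : Module.finrank (ZMod 2) ↥(U ⊔ Submodule.span (ZMod 2) {x}) ≤ 5 :=
      finrank_V6 ▸ Submodule.finrank_le _
    omega
  have hy' : y ∈ U ⊔ Submodule.span (ZMod 2) {x} := htop ▸ Submodule.mem_top
  rw [Submodule.mem_sup] at hy'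
  obtain ⟨u, hu, z, hz, hyz⟩ := hy'
  rw [Submodule.mem_span_singleton] at hz
  obtain ⟨c, rfl⟩ := hz
  have hc : c = 0 ∨ c = 1 := by
    have : ∀ d : ZMod 2, d = 0 ∨ d = 1 := by decide
    exact this c
  rcases hc with rfl | rfl
  · simp at hyz; exact absurd (hyz ▸ hu) hy
  · have hxx : x + x = 0 := by
      rw [← two_smul (ZMod 2)]
      simp [show (2 : ZMod 2) = 0 by decide]
    have : x + y = u := by
      rw [← hyz, one_smul, add_comm u x, ← add_assoc, hxx, zero_add]
    exact this ▸ hu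

theorem stmt_0 (S : V 6 → ℕ)
    (hS : ∀ e : F2 6, S (Submodule.Quotient.mk e) = min (wt e) (6 - wt e))
    (U : Submodule (ZMod 2) (V 6))
    (hU : Module.finrank (ZMod 2) U = 4)
    (h1 : ∀ u ∈ U, S u ≠ 1) :
    ∃ a b c : V 6, a ∈ U ∧ b ∈ U ∧ c ∈ U ∧ a + b + c = 0 ∧
      S a = 2 ∧ S b = 2 ∧ S c = 2 := by
  -- basis classes not in U
  have hbasis : ∀ i : Fin 6, Submodule.Quotient.mk (Pi.single i 1 : F2 6) ∉ U := by
    intro i hmem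
    apply h1 _ hmem
    rw [hS]
    fin_cases i <;> decide
  have pair : ∀ i j : Fin 6,
      (Submodule.Quotient.mk (Pi.single i 1 + Pi.single j 1 : F2 6) : V 6) ∈ U := by
    intro i j
    have := sum_mem_of_not_mem U hU (hbasis i) (hbasis j)
    rwa [← Submodule.Quotient.mk_add] at this
  refine ⟨Submodule.Quotient.mk (Pi.single 0 1 + Pi.single 1 1 : F2 6),
    Submodule.Quotient.mk (Pi.single 2 1 + Pi.single 3 1 : F2 6),
    Submodule.Quotient.mk (Pi.single 4 1 + Pi.single 5 1 : F2 6),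
    pair 0 1, pair 2 3, pair 4 5, ?_, ?_, ?_, ?_⟩
  · rw [← Submodule.Quotient.mk_add, ← Submodule.Quotient.mk_add,
      Submodule.Quotient.mk_eq_zero]
    have : (Pi.single 0 1 + Pi.single 1 1 + (Pi.single 2 1 + Pi.single 3 1)
        + (Pi.single 4 1 + Pi.single 5 1) : F2 6) = (fun _ => 1) := by
      funext k; fin_cases k <;> decide
    rw [this]
    exact Submodule.mem_span_singleton_self _
  · rw [hS, show wt (Pi.single 0 1 + Pi.single 1 1 : F2 6) = 2 from by decide]
    omega
  · rw [hS, show wt (Pi.single 2 1 + Pi.single 3 1 : F2 6) = 2 from by decide]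
    omega
  · rw [hS, show wt (Pi.single 4 1 + Pi.single 5 1 : F2 6) = 2 from by decide]
    omega
end

section
/- Let t = 7 and 2k ∈ {2, 4, 6}. Let V^(2k) be the kernel in F_2^7 / X (X spanned by the all-ones vector) of the linear map T_{2k} sending the class of (u_1,...,u_7) to u_1 + ... + u_{2k} (sum in F_2). Define S on V^(2k) as min(weight, 7 − weight) of a representative. Then V^(2k) contains no 4-dimensional F_2-subspace U with U ∩ {S = 1} = ∅ and U ∩ {S = 2} = ∅. -/
open Finset
open scoped symmDiff

namespace F2

theorem zmod_two_eq_zero_or_eq_one (a : ZMod 2) : a = 0 ∨ a = 1 := by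
  revert a; decide

variable {t : ℕ}

def supp (e : F2 t) : Finset (Fin t) := {i | e i = 1}

theorem wt_eq_card_supp (e : F2 t) : wt e = #(supp e) := rfl

@[simp]
theorem mem_supp {e : F2 t} {i : Fin t} : i ∈ supp e ↔ e i = 1 := by simp [supp]

theorem supp_injective : Function.Injective (supp : F2 t → Finset (Fin t)) := by
  intro e f h
  funext i
  have hi : e i = 1 ↔ f i = 1 := by rw [← mem_supp, h, mem_supp]
  rcases zmod_two_eq_zero_or_eq_one (e i) with he | he <;>
    rcases zmod_two_eq_zero_or_eq_one (f i) with hf | hf <;> simp_all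

theorem supp_add (e f : F2 t) : supp (e + f) = supp e ∆ supp f := by
  ext i
  simp only [mem_supp, mem_symmDiff, Pi.add_apply]
  rcases zmod_two_eq_zero_or_eq_one (e i) with he | he <;>
    rcases zmod_two_eq_zero_or_eq_one (f i) with hf | hf <;> simp [he, hf]

theorem supp_add_one (e : F2 t) : supp (e + 1) = (supp e)ᶜ := by
  ext i
  simp only [mem_supp, mem_compl, Pi.add_apply, Pi.one_apply]
  rcases zmod_two_eq_zero_or_eq_one (e i) with he | he <;> simp [he]

theorem supp_zero : supp (0 : F2 t) = ∅ := by ext; simp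

theorem supp_one : supp (1 : F2 t) = univ := by ext; simp

theorem wt_le (e : F2 t) : wt e ≤ t := (card_le_univ _).trans_eq (Fintype.card_fin t)

theorem wt_add_one (e : F2 t) : wt (e + 1) = t - wt e := by
  rw [wt_eq_card_supp, supp_add_one, card_compl, Fintype.card_fin, wt_eq_card_supp]

theorem wt_add_add_two_mul_card_inter (e f : F2 t) :
    wt (e + f) + 2 * #(supp e ∩ supp f) = wt e + wt f := by
  rw [wt_eq_card_supp (e + f), supp_add, symmDiff_eq_sup_sdiff_inf, sup_eq_union, inf_eq_inter,
    card_sdiff_of_subset inter_subset_union, wt_eq_card_supp, wt_eq_card_supp,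
    ← card_union_add_card_inter]
  have := card_le_card (inter_subset_union (s := supp e) (t := supp f))
  omega

theorem mem_allOnes_iff {e : F2 t} : e ∈ allOnes t ↔ e = 0 ∨ e = 1 := by
  rw [allOnes, Submodule.mem_span_singleton]
  constructor
  · rintro ⟨c, rfl⟩
    rcases zmod_two_eq_zero_or_eq_one c with rfl | rfl
    · simp
    · right; rfl
  · rintro (rfl | rfl)
    · exact ⟨0, zero_smul _ _⟩
    · exact ⟨1, one_smul _ _⟩

theorem mk_eq_zero_iff {e : F2 t} :
    (Submodule.Quotient.mk e : V t) = 0 ↔ wt e = 0 ∨ wt e = t := by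
  have hcard : #(supp e) = t ↔ supp e = univ := by
    rw [← card_eq_iff_eq_univ, Fintype.card_fin]
  rw [Submodule.Quotient.mk_eq_zero, mem_allOnes_iff, wt_eq_card_supp, card_eq_zero, hcard,
    ← supp_zero, ← supp_one, supp_injective.eq_iff, supp_injective.eq_iff]

theorem mk_add_one (e : F2 t) :
    (Submodule.Quotient.mk (e + 1) : V t) = Submodule.Quotient.mk e := by
  rw [Submodule.Quotient.mk_add, (Submodule.Quotient.mk_eq_zero _).mpr
    (mem_allOnes_iff.mpr (Or.inr rfl)), add_zero]

end F2

namespace Finset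

variable {α : Type*} [Fintype α] [DecidableEq α] {B : Finset (Finset α)} {r : ℕ}

theorem card_filter_mem_mul_le_of_pairwise_card_inter_le_one
    (hcard : ∀ s ∈ B, #s = r + 1) (hB : (B : Set (Finset α)).Pairwise fun s t => #(s ∩ t) ≤ 1)
    (a : α) : #{s ∈ B | a ∈ s} * r ≤ Fintype.card α - 1 := by
  set C := {s ∈ B | a ∈ s}
  have hdisj : (C : Set (Finset α)).PairwiseDisjoint fun s => s.erase a := by
    intro s hs t ht hst
    rw [mem_coe, mem_filter] at hs ht
    refine disjoint_left.mpr fun x hxs hxt => ?_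
    have hpair : {a, x} ⊆ s ∩ t := by
      simp [insert_subset_iff, hs.2, ht.2, mem_of_mem_erase hxs, mem_of_mem_erase hxt]
    have hax : a ≠ x := fun h => by simp [h] at hxs
    have := (card_le_card hpair).trans (hB hs.1 ht.1 hst)
    rw [card_pair hax] at this
    omega
  calc #C * r = ∑ s ∈ C, #(s.erase a) := by
        rw [card_eq_sum_ones, sum_mul]
        refine sum_congr rfl fun s hs => ?_
        rw [mem_filter] at hs
        rw [card_erase_of_mem hs.2, hcard s hs.1]
        simp
    _ = #(C.biUnion fun s => s.erase a) := (card_biUnion hdisj).symm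
    _ ≤ #(univ.erase a) := card_le_card fun x hx => by
        obtain ⟨s, -, hx⟩ := mem_biUnion.mp hx
        exact mem_erase.mpr ⟨ne_of_mem_erase hx, mem_univ x⟩
    _ = Fintype.card α - 1 := card_erase_of_mem (mem_univ a)

theorem card_mul_le_of_pairwise_card_inter_le_one
    (hcard : ∀ s ∈ B, #s = r + 1) (hB : (B : Set (Finset α)).Pairwise fun s t => #(s ∩ t) ≤ 1) :
    #B * (r + 1) * r ≤ Fintype.card α * (Fintype.card α - 1) := by
  rcases Nat.eq_zero_or_pos r with rfl | hr
  · simp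
  have hsum : ∑ s ∈ B, #s ≤ Fintype.card α * ((Fintype.card α - 1) / r) :=
    sum_card_le fun a => (Nat.le_div_iff_mul_le hr).mpr
      (card_filter_mem_mul_le_of_pairwise_card_inter_le_one hcard hB a)
  rw [sum_congr rfl hcard, sum_const, smul_eq_mul] at hsum
  calc #B * (r + 1) * r ≤ Fintype.card α * ((Fintype.card α - 1) / r) * r :=
        Nat.mul_le_mul_right r hsum
    _ ≤ Fintype.card α * (Fintype.card α - 1) := by
        rw [mul_assoc]
        exact Nat.mul_le_mul_left _ (Nat.div_mul_le_self _ _)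

end Finset

section Weight7

variable (S : V 7 → ℕ) (hS : ∀ e : F2 7, S (Submodule.Quotient.mk e) = min (wt e) (7 - wt e))
include hS

theorem exists_mk_eq_and_wt_eq_three {u : V 7} (hu : u ≠ 0) (h1 : S u ≠ 1) (h2 : S u ≠ 2) :
    ∃ e : F2 7, Submodule.Quotient.mk e = u ∧ wt e = 3 := by
  obtain ⟨e, rfl⟩ := Submodule.Quotient.mk_surjective _ u
  rw [hS] at h1 h2
  have hne : ¬(wt e = 0 ∨ wt e = 7) := fun h => hu (F2.mk_eq_zero_iff.mpr h)
  have := F2.wt_le e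
  by_cases h3 : wt e = 3
  · exact ⟨e, rfl, h3⟩
  · exact ⟨e + 1, F2.mk_add_one e, by rw [F2.wt_add_one]; omega⟩

theorem card_supp_inter_le_one_of_wt_eq_three {e f : F2 7} (he : wt e = 3) (hf : wt f = 3)
    (hef : e ≠ f) (h2 : S (Submodule.Quotient.mk (e + f)) ≠ 2) :
    #(F2.supp e ∩ F2.supp f) ≤ 1 := by
  rw [hS] at h2
  have hsum := F2.wt_add_add_two_mul_card_inter e f
  have hpos : wt (e + f) ≠ 0 := by
    rw [F2.wt_eq_card_supp, F2.supp_add, Ne, card_eq_zero, symmDiff_eq_empty,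
      F2.supp_injective.eq_iff]
    exact hef
  have := F2.wt_le (e + f)
  omega

theorem exists_fifteen_triples_of_finrank_eq_four {U : Submodule (ZMod 2) (V 7)}
    (hU : Module.finrank (ZMod 2) U = 4) (h1 : ∀ u ∈ U, S u ≠ 1) (h2 : ∀ u ∈ U, S u ≠ 2) :
    ∃ B : Finset (Finset (Fin 7)), #B = 15 ∧ (∀ s ∈ B, #s = 3) ∧
      (B : Set (Finset (Fin 7))).Pairwise fun s t => #(s ∩ t) ≤ 1 := by
  classical
  have hrep (u : U) (hu : u ≠ 0) : ∃ e : F2 7, Submodule.Quotient.mk e = (u : V 7) ∧ wt e = 3 :=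
    exists_mk_eq_and_wt_eq_three S hS (by simpa using hu) (h1 u u.2) (h2 u u.2)
  choose! rep hrep_mk hrep_wt using hrep
  have hcard : #(univ.erase (0 : U)) = 15 := by
    rw [card_erase_of_mem (mem_univ _), card_univ,
      Module.card_eq_pow_finrank (K := ZMod 2) (V := U), hU, ZMod.card]
    rfl
  have hrep_inj {u v : U} (hu : u ≠ 0) (hv : v ≠ 0) (h : rep u = rep v) : u = v :=
    Subtype.ext (by rw [← hrep_mk u hu, ← hrep_mk v hv, h])
  have hinj : Set.InjOn (fun u => F2.supp (rep u)) (univ.erase (0 : U) : Set U) := by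
    intro u hu v hv huv
    rw [mem_coe, mem_erase] at hu hv
    exact hrep_inj hu.1 hv.1 (F2.supp_injective huv)
  refine ⟨(univ.erase (0 : U)).image fun u => F2.supp (rep u),
    by rw [card_image_of_injOn hinj, hcard], ?_, ?_⟩
  · simp only [mem_image]
    rintro _ ⟨u, hu, rfl⟩
    exact hrep_wt u (ne_of_mem_erase hu)
  · rw [coe_image, hinj.pairwise_image]
    intro u hu v hv huv
    rw [mem_coe, mem_erase] at hu hv
    have hmk : Submodule.Quotient.mk (rep u + rep v) = ((u + v : U) : V 7) := by
      rw [Submodule.Quotient.mk_add, hrep_mk u hu.1, hrep_mk v hv.1, Submodule.coe_add]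
    refine card_supp_inter_le_one_of_wt_eq_three S hS (hrep_wt u hu.1) (hrep_wt v hv.1)
      (fun h => huv (hrep_inj hu.1 hv.1 h)) ?_
    rw [hmk]
    exact h2 _ (u + v).2

end Weight7

theorem stmt_4_general
    (S : V 7 → ℕ)
    (hS : ∀ e : F2 7, S (Submodule.Quotient.mk e) = min (wt e) (7 - wt e))
    (T : V 7 → ZMod 2) :
    ¬ ∃ U : Submodule (ZMod 2) (V 7), Module.finrank (ZMod 2) U = 4 ∧
        (∀ u ∈ U, T u = 0) ∧ (∀ u ∈ U, S u ≠ 1) ∧ (∀ u ∈ U, S u ≠ 2) := by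
  rintro ⟨U, hU, -, h1, h2⟩
  obtain ⟨B, hB15, hB3, hB⟩ := exists_fifteen_triples_of_finrank_eq_four S hS hU h1 h2
  have := card_mul_le_of_pairwise_card_inter_le_one (r := 2) hB3 hB
  simp [hB15] at this

theorem stmt_4 (k : ℕ) (hk : 1 ≤ k) (hk' : k ≤ 3)
    (S : V 7 → ℕ)
    (hS : ∀ e : F2 7, S (Submodule.Quotient.mk e) = min (wt e) (7 - wt e))
    (T : V 7 → ZMod 2)
    (hT : ∀ e : F2 7,
      T (Submodule.Quotient.mk e) = ∑ i : Fin 7, if (i : ℕ) < 2 * k then e i else 0) :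
    ¬ ∃ U : Submodule (ZMod 2) (V 7), Module.finrank (ZMod 2) U = 4 ∧
        (∀ u ∈ U, T u = 0) ∧ (∀ u ∈ U, S u ≠ 1) ∧ (∀ u ∈ U, S u ≠ 2) :=
  stmt_4_general S hS T
end
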